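/- For all Z₁, Z₂, Z₃ ∈ S₁ and Y ∈ S₀, the element s₃(ad Z₂, ad Z₃, ad Y) applied to Z₁ equals 2·[[Z₁, Y], [Z₂, Z₃]], where ad X denotes the map W ↦ XW − WX on 3×3 matrices. -/

import Mathlib

open Matrix

variable {K : Type*} [Field K] [CharZero K]

/-- Elements of `S₀`: diag(0, 2a, -2a). -/
def Y0 (a : K) : Matrix (Fin 3) (Fin 3) K :=
  !![0, 0, 0; 0, 2*a, 0; 0, 0, -(2*a)]

/-- Elements of `S₁`: rows (0, -m, n), (-2n, 0, 0), (2m, 0, 0). -/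
def Z1 (m n : K) : Matrix (Fin 3) (Fin 3) K :=
  !![0, -m, n; -(2*n), 0, 0; 2*m, 0, 0]

/-- The adjoint map on 3×3 matrices. -/
def adM (X : Matrix (Fin 3) (Fin 3) K) : Matrix (Fin 3) (Fin 3) K → Matrix (Fin 3) (Fin 3) K :=
  fun W => X*W - W*X

/-- Commutator of matrices. -/
def lb (A B : Matrix (Fin 3) (Fin 3) K) : Matrix (Fin 3) (Fin 3) K := A*B - B*A

/-- The standard polynomial of degree 3 on three maps, applied to a matrix. -/
def s3map (f g h : Matrix (Fin 3) (Fin 3) K → Matrix (Fin 3) (Fin 3) K)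
    (W : Matrix (Fin 3) (Fin 3) K) : Matrix (Fin 3) (Fin 3) K :=
  f (g (h W)) - f (h (g W)) - g (f (h W)) + g (h (f W)) + h (f (g W)) - h (g (f W))

/-! The matrices of `S₀ ⊕ S₁` form a Lie algebra (a copy of `sl₂`) with the multiplication table
`[Y0 a, Z1 m n] = Z1 (-2am) (2an)`, `[Z1 m n, Z1 m' n'] = Y0 (nm' - mn')`, `[Y0 a, Y0 b] = 0`.
Both sides of the identity are therefore of the form `Z1 p q` with `p, q` polynomial in the
parameters, and comparing these polynomials finishes the proof. -/

section

variable {F : Type*} [Field F]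

theorem adM_eq_lb (X : Matrix (Fin 3) (Fin 3) F) : adM X = lb X := rfl

theorem lb_zero_right (A : Matrix (Fin 3) (Fin 3) F) : lb A 0 = 0 := by
  simp [lb]

theorem Z1_add (m n m' n' : F) : Z1 m n + Z1 m' n' = Z1 (m + m') (n + n') := by
  ext i j; fin_cases i <;> fin_cases j <;> simp [Z1] <;> ring

theorem Z1_sub (m n m' n' : F) : Z1 m n - Z1 m' n' = Z1 (m - m') (n - n') := by
  ext i j; fin_cases i <;> fin_cases j <;> simp [Z1] <;> ring

theorem lb_Y0_Y0 (a b : F) : lb (Y0 a) (Y0 b) = 0 := by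
  simp only [lb, Y0, mul_fin_three]
  ext i j; fin_cases i <;> fin_cases j <;> simp <;> ring

theorem lb_Y0_Z1 (a m n : F) : lb (Y0 a) (Z1 m n) = Z1 (-(2 * a * m)) (2 * a * n) := by
  simp only [lb, Y0, Z1, mul_fin_three]
  ext i j; fin_cases i <;> fin_cases j <;> simp <;> ring

theorem lb_Z1_Y0 (m n a : F) : lb (Z1 m n) (Y0 a) = Z1 (2 * a * m) (-(2 * a * n)) := by
  simp only [lb, Y0, Z1, mul_fin_three]
  ext i j; fin_cases i <;> fin_cases j <;> simp <;> ring

theorem lb_Z1_Z1 (m n m' n' : F) : lb (Z1 m n) (Z1 m' n') = Y0 (n * m' - m * n') := by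
  simp only [lb, Y0, Z1, mul_fin_three]
  ext i j; fin_cases i <;> fin_cases j <;> simp <;> ring

end

theorem stmt18 (m1 n1 m2 n2 m3 n3 a : K) :
    s3map (adM (Z1 m2 n2)) (adM (Z1 m3 n3)) (adM (Y0 a)) (Z1 m1 n1)
      = 2 • lb (lb (Z1 m1 n1) (Y0 a)) (lb (Z1 m2 n2) (Z1 m3 n3)) := by
  simp only [s3map, adM_eq_lb, lb_Y0_Z1, lb_Z1_Y0, lb_Z1_Z1, lb_Y0_Y0,
    lb_zero_right, sub_zero, add_zero, two_nsmul, Z1_add, Z1_sub]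
  congr 1 <;> ring
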